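/- arXiv:1703.02418 — 5 statements merged into one kernel-verified Lean document; each statement's English description precedes it below -/
import Mathlib

section
/- (One-dimensional functional Hodge decomposition) Let j be a translational covariant discrete vector field on the ring ℤ_N, i.e. j_η(x,x+1)=j_{τ_z η}(x+z,x+z+1) for all z, where configurations are η:ℤ_N→{0,1} and (τ_z η)(x)=η(x−z). Define C(η):=(1/N)Σ_{x∈ℤ_N} j_η(x,x+1) and h(η):=Σ_{x=1}^{N−1}(x/N) j_η(x,x+1). Then C is translational invariant (C(τ_z η)=C(η) for all z) and for all η and x: j_η(x,x+1)=τ_{x+1}h(η)−τ_x h(η)+C(η), where (τ_x h)(η)=h(τ_{−x}η). -/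
open Finset


lemma sum_zmod_range (N : ℕ) [NeZero N] (f : ZMod N → ℝ) :
    ∑ k ∈ range N, f (k : ZMod N) = ∑ v : ZMod N, f v := by
  refine Finset.sum_nbij' (fun k => (k : ZMod N)) (fun v => v.val) ?_ ?_ ?_ ?_ ?_
  · intro k hk; exact Finset.mem_univ _
  · intro v _; exact Finset.mem_range.2 (ZMod.val_lt v)
  · intro k hk; exact ZMod.val_natCast_of_lt (Finset.mem_range.1 hk)
  · intro v _; exact ZMod.natCast_rightInverse v
  · intro k hk; rfl

lemma sum_zmod_shift (N : ℕ) [NeZero N] (f : ZMod N → ℝ) (x : ZMod N) :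
    ∑ v : ZMod N, f (v + x) = ∑ v : ZMod N, f v :=
  Fintype.sum_bijective (· + x) (Equiv.addRight x).bijective _ _ (fun _ => rfl)

lemma key (N : ℕ) [NeZero N] (f : ZMod N → ℝ) (x : ZMod N) :
    (∑ k ∈ range N, ((k:ℝ)/N) * f ((k:ZMod N)+x+1))
    - ∑ k ∈ range N, ((k:ℝ)/N) * f ((k:ZMod N)+x)
    = f x - (1/(N:ℝ)) * ∑ v : ZMod N, f v := by
  have hN : (N:ℝ) ≠ 0 := Nat.cast_ne_zero.2 (NeZero.ne N)
  set F : ℕ → ℝ := fun k => f ((k:ZMod N)+x) with hF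
  set G : ℕ → ℝ := fun k => ((k:ℝ)/N) * F k with hG
  have hFN : F N = f x := by simp [hF]
  have hF0 : F 0 = f x := by simp [hF]
  have h1 : ∀ k : ℕ, ((k:ℝ)/N) * f ((k:ZMod N)+x+1) = G (k+1) - (1/(N:ℝ)) * F (k+1) := by
    intro k
    have : ((k:ZMod N)+x+1 : ZMod N) = (((k+1:ℕ)):ZMod N)+x := by push_cast; ring
    rw [this]
    simp only [hG, hF]
    push_cast
    field_simp
    ring
  rw [Finset.sum_congr rfl (fun k _ => h1 k), Finset.sum_sub_distrib, ← Finset.mul_sum]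
  have hshift : ∀ (H : ℕ → ℝ), ∑ k ∈ range N, H (k+1) = ∑ k ∈ range N, H k + H N - H 0 := by
    intro H
    have := Finset.sum_range_succ' H N
    have h2 := Finset.sum_range_succ H N
    linarith [this, h2]
  rw [hshift G, hshift F]
  have hG0 : G 0 = 0 := by simp [hG]
  have hGN : G N = f x := by simp [hG, hFN, div_self hN]
  have hsum : ∑ k ∈ range N, F k = ∑ v : ZMod N, f v := by
    rw [← sum_zmod_shift N f x]
    exact sum_zmod_range N (fun v => f (v + x))
  rw [hG0, hGN, hF0, hFN, hsum]
  simp only [hG, hF]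
  ring

/-- one dimensional functional Hodge decomposition:
For a translational covariant discrete vector field `j` on the ring `ℤ_N`
(`j η x` is the value of `j_η` on the oriented edge `(x, x+1)`), setting
`C(η) = (1/N) Σ_x j_η(x,x+1)` and `h(η) = Σ_{x=1}^{N-1} (x/N) j_η(x,x+1)`,
the function `C` is translational invariant and
`j_η(x,x+1) = τ_{x+1}h(η) − τ_x h(η) + C(η)`, where `(τ_x h)(η) = h(τ_{−x} η)`
and `(τ_z η)(v) = η(v − z)`. -/
theorem functional_hodge_decomposition_1d
    (N : ℕ) [NeZero N]
    (j : (ZMod N → Bool) → ZMod N → ℝ)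
    (hcov : ∀ (η : ZMod N → Bool) (z x : ZMod N),
      j η x = j (fun v => η (v - z)) (x + z))
    (C : (ZMod N → Bool) → ℝ)
    (hC : ∀ η, C η = (1 / (N : ℝ)) * ∑ x : ZMod N, j η x)
    (h : (ZMod N → Bool) → ℝ)
    (hh : ∀ η, h η = ∑ k ∈ Finset.Ico 1 N, ((k : ℝ) / (N : ℝ)) * j η (k : ZMod N)) :
    (∀ (η : ZMod N → Bool) (z : ZMod N), C (fun v => η (v - z)) = C η)
    ∧ (∀ (η : ZMod N → Bool) (x : ZMod N),
        j η x = h (fun v => η (v + (x + 1))) - h (fun v => η (v + x)) + C η) := by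
  -- rewrite h as range-N sum
  have hIco : ∀ (g : ℕ → ℝ), ∑ k ∈ Finset.Ico 1 N, ((k:ℝ)/N) * g k
      = ∑ k ∈ range N, ((k:ℝ)/N) * g k := by
    intro g
    apply Finset.sum_subset
    · intro k hk
      rw [Finset.mem_Ico] at hk; exact Finset.mem_range.2 hk.2
    · intro k hk hk'
      rw [Finset.mem_range] at hk
      rw [Finset.mem_Ico] at hk'
      have : k = 0 := by omega
      simp [this]
  have hcov' : ∀ (η : ZMod N → Bool) (x k : ZMod N),
      j (fun v => η (v + x)) k = j η (k + x) := by
    intro η x k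
    have := hcov η (-x) (k + x)
    simp only [sub_neg_eq_add, add_neg_cancel_right] at this
    exact this.symm
  constructor
  · intro η z
    rw [hC, hC]
    congr 1
    have : ∀ v : ZMod N, j (fun w => η (w - z)) v = j η (v - z) := by
      intro v
      have := hcov η z (v - z)
      rw [sub_add_cancel] at this
      exact this.symm
    rw [Finset.sum_congr rfl (fun v _ => this v)]
    exact Fintype.sum_bijective (· - z) (Equiv.subRight z).bijective _ _ (fun _ => rfl)
  · intro η x
    rw [hh, hh, hIco, hIco]
    have e1 : ∀ k ∈ range N, ((k:ℝ)/N) * j (fun v => η (v + (x+1))) (k:ZMod N)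
        = ((k:ℝ)/N) * j η ((k:ZMod N) + x + 1) := by
      intro k _; rw [hcov']; ring_nf
    have e2 : ∀ k ∈ range N, ((k:ℝ)/N) * j (fun v => η (v + x)) (k:ZMod N)
        = ((k:ℝ)/N) * j η ((k:ZMod N) + x) := by
      intro k _; rw [hcov']
    rw [Finset.sum_congr rfl e1, Finset.sum_congr rfl e2, key N (j η) x, hC]
    ring
end

section
/- If a translational covariant discrete vector field j on ℤ_N is of gradient type, i.e. j_η(x,x+1)=τ_{x+1}h(η)−τ_x h(η) for some function h, then Σ_{x∈ℤ_N} j_η(x,x+1)=0 for every configuration η. Conversely, if Σ_{x∈ℤ_N} j_η(x,x+1)=0 for every η, then there exists a function h with j_η(x,x+1)=τ_{x+1}h(η)−τ_x h(η). -/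
open Finset

/-- A translational covariant discrete vector field `j` on `ℤ_N`
is of gradient type, i.e. `j_η(x,x+1) = τ_{x+1}h(η) − τ_x h(η)` for some
function `h`, if and only if `Σ_{x∈ℤ_N} j_η(x,x+1) = 0` for every
configuration `η`. -/
theorem gradient_iff_zero_total_current_1d
    (N : ℕ) [NeZero N]
    (j : (ZMod N → Bool) → ZMod N → ℝ)
    (hcov : ∀ (η : ZMod N → Bool) (z x : ZMod N),
      j η x = j (fun v => η (v - z)) (x + z)) :
    (∃ h : (ZMod N → Bool) → ℝ, ∀ (η : ZMod N → Bool) (x : ZMod N),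
        j η x = h (fun v => η (v + (x + 1))) - h (fun v => η (v + x)))
      ↔ (∀ η : ZMod N → Bool, ∑ x : ZMod N, j η x = 0) := by
  have key : ∀ (η : ZMod N → Bool) (x : ZMod N),
      j η x = j (fun v => η (v + x)) 0 := by
    intro η x
    simpa [sub_neg_eq_add] using hcov η (-x) x
  constructor
  · rintro ⟨h, hh⟩ η
    have e1 : ∑ x : ZMod N, j η x
        = ∑ x : ZMod N, (h (fun v => η (v + (x + 1))) - h (fun v => η (v + x))) :=
      Finset.sum_congr rfl fun x _ => hh η x
    rw [e1, Finset.sum_sub_distrib]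
    have e2 : ∑ x : ZMod N, h (fun v => η (v + (x + 1)))
        = ∑ x : ZMod N, h (fun v => η (v + x)) :=
      Fintype.sum_equiv (Equiv.addRight 1) _ _ (fun x => rfl)
    rw [e2, sub_self]
  · intro hsum
    set g : (ZMod N → Bool) → ℝ := fun ζ => j ζ 0 with hgdef
    have hN : (N : ℝ) ≠ 0 := by exact_mod_cast (NeZero.ne N)
    have gsum : ∀ ζ : ZMod N → Bool, ∑ z : ZMod N, g (fun v => ζ (v + z)) = 0 := by
      intro ζ
      have h0 := hsum ζ
      rwa [Finset.sum_congr rfl (fun z _ => key ζ z)] at h0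
    have valfact : ∀ z : ZMod N,
        (((z - 1).val : ℝ)) - (z.val : ℝ) = (if z = 0 then (N : ℝ) else 0) - 1 := by
      intro z
      by_cases hz : z = 0
      · subst hz
        simp only [ZMod.val_zero, Nat.cast_zero, sub_zero, if_pos, zero_sub]
        obtain ⟨m, rfl⟩ := Nat.exists_eq_succ_of_ne_zero (NeZero.ne N)
        rw [ZMod.val_neg_one]
        push_cast
        ring
      · have hN1 : N ≠ 1 := by
          rintro rfl
          exact hz (Subsingleton.elim z 0)
        have h1 : (1 : ZMod N).val = 1 := ZMod.val_one'' hN1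
        have hle : (1 : ZMod N).val ≤ z.val := by
          rw [h1]
          exact Nat.one_le_iff_ne_zero.mpr (fun h0 => hz ((ZMod.val_eq_zero z).mp h0))
        have hge : 1 ≤ z.val := h1 ▸ hle
        rw [if_neg hz, ZMod.val_sub hle, h1, Nat.cast_sub hge]
        push_cast
        ring
    refine ⟨fun μ => (N : ℝ)⁻¹ * ∑ y : ZMod N, (y.val : ℝ) * g (fun v => μ (v + y)), ?_⟩
    intro η x
    rw [key η x]
    set ζ : ZMod N → Bool := fun v => η (v + x) with hζ
    have e1 : ∀ y : ZMod N,
        (fun v => η (v + y + (x + 1))) = (fun v => ζ (v + (y + 1))) := by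
      intro y; funext v; simp only [hζ]; congr 1; ring
    have e2 : ∀ y : ZMod N,
        (fun v => η (v + y + x)) = (fun v => ζ (v + y)) := fun y => rfl
    show g ζ = ((N : ℝ)⁻¹ * ∑ y : ZMod N, (y.val : ℝ) * g (fun v => η (v + y + (x + 1))))
        - ((N : ℝ)⁻¹ * ∑ y : ZMod N, (y.val : ℝ) * g (fun v => η (v + y + x)))
    simp only [e1, e2]
    have A : ∑ y : ZMod N, (y.val : ℝ) * g (fun v => ζ (v + (y + 1)))
        = ∑ z : ZMod N, (((z - 1).val : ℝ)) * g (fun v => ζ (v + z)) := by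
      refine Fintype.sum_equiv (Equiv.addRight 1) _ _ (fun y => ?_)
      simp
    rw [A, ← mul_sub, ← Finset.sum_sub_distrib]
    have B : ∑ z : ZMod N, ((((z - 1).val : ℝ)) * g (fun v => ζ (v + z))
          - (z.val : ℝ) * g (fun v => ζ (v + z)))
        = ∑ z : ZMod N, ((if z = 0 then (N : ℝ) else 0) - 1) * g (fun v => ζ (v + z)) := by
      refine Finset.sum_congr rfl (fun z _ => ?_)
      rw [← sub_mul, valfact z]
    rw [B]
    have C : ∑ z : ZMod N, ((if z = 0 then (N : ℝ) else 0) - 1) * g (fun v => ζ (v + z))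
        = (N : ℝ) * g ζ := by
      have hsplit : ∀ z : ZMod N,
          ((if z = 0 then (N : ℝ) else 0) - 1) * g (fun v => ζ (v + z))
          = (if z = 0 then (N : ℝ) * g (fun v => ζ (v + z)) else 0)
            - g (fun v => ζ (v + z)) := by
        intro z
        by_cases hz : z = 0
        · simp [hz]; ring
        · simp [hz]
      rw [Finset.sum_congr rfl (fun z _ => hsplit z), Finset.sum_sub_distrib,
        Finset.sum_ite_eq' Finset.univ (0 : ZMod N)
          (fun z => (N : ℝ) * g (fun v => ζ (v + z))), gsum ζ]
      simp
    rw [C]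
    field_simp
end

section
/- (2d functional Hodge decomposition) Let j be a translational covariant discrete vector field on ℤ_N², i.e. j_η(x,y)=j_{τ_zη}(x+z,y+z) for all z. Then there exist functions h, g on configurations and translational invariant functions C⁽¹⁾, C⁽²⁾ such that for every oriented edge e=(x,x±e⁽ⁱ⁾): j_η(e)=[τ_{e⁺}h(η)−τ_{e⁻}h(η)]+[τ_{𝔣⁺(e)}g(η)−τ_{𝔣⁻(e)}g(η)]±C⁽ⁱ⁾(η). The functions C⁽ⁱ⁾ are uniquely determined and equal (1/N²)Σ_x j_η(x,x+e⁽ⁱ⁾); h and g are unique up to additive translational invariant functions. -/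
open Finset

abbrev Torus2 (N : ℕ) := ZMod N × ZMod N

/-- Translation of a configuration: `(τ_z η)(v) = η(v − z)`. -/
def trC {N : ℕ} (z : Torus2 N) (η : Torus2 N → Bool) : Torus2 N → Bool :=
  fun v => η (v - z)

/-- The four edge equations of the 2d functional Hodge decomposition
`j_η(e) = [τ_{e⁺}h − τ_{e⁻}h](η) + [τ_{𝔣⁺(e)}g − τ_{𝔣⁻(e)}g](η) ± C⁽ⁱ⁾(η)`,
for the edges `(x, x±e⁽ⁱ⁾)`, `i = 1, 2`; here `(τ_x h)(η) = h(τ_{−x}η)` and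
`τ_𝔣 = τ_a` with `a` the lower-left corner of the face `𝔣`. -/
def hodgeEqs {N : ℕ} (j : (Torus2 N → Bool) → Torus2 N → Torus2 N → ℝ)
    (h g C₁ C₂ : (Torus2 N → Bool) → ℝ) : Prop :=
  ∀ (η : Torus2 N → Bool) (x : Torus2 N),
    (j η x (x + (1, 0))
      = (h (trC (-(x + (1, 0))) η) - h (trC (-x) η))
        + (g (trC (-x) η) - g (trC (-(x - (0, 1))) η)) + C₁ η)
    ∧ (j η x (x + (0, 1))
      = (h (trC (-(x + (0, 1))) η) - h (trC (-x) η))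
        + (g (trC (-(x - (1, 0))) η) - g (trC (-x) η)) + C₂ η)
    ∧ (j η x (x - (1, 0))
      = (h (trC (-(x - (1, 0))) η) - h (trC (-x) η))
        + (g (trC (-(x - (1, 0) - (0, 1))) η) - g (trC (-(x - (1, 0))) η)) - C₁ η)
    ∧ (j η x (x - (0, 1))
      = (h (trC (-(x - (0, 1))) η) - h (trC (-x) η))
        + (g (trC (-(x - (0, 1))) η) - g (trC (-(x - (1, 0) - (0, 1))) η)) - C₂ η)


/-!
By covariance, a decomposition is determined by the two fields `u_i η = j_η(0, e⁽ⁱ⁾)`, and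
`C⁽ⁱ⁾(η)` is the average of `u_i` over the translates of `η`. The map from potentials `(h, g)`
to the field `∇h + ∇^⊥g` on the edges `(0, e⁽ⁱ⁾)` and the map `(div, curl)` from fields to
pairs of functions compose, in both orders, to the (positive) lattice Laplacian acting through
translations of configurations. Summation by parts shows that the Laplacian kills only
translation invariant functions, because the unit translations generate `ℤ_N²`; by finite
dimensionality it therefore maps onto the functions of zero average. Existence: write
`u_i - C⁽ⁱ⁾ = Δφ_i` and take `(h, g) = (div φ, curl φ)`. Uniqueness: applying `div` and `curl`
to the difference of two decompositions makes the differences of the potentials harmonic, hence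
invariant; summing the edge equations over `x` identifies `C⁽ⁱ⁾`.
-/

namespace FunctionalHodge

abbrev Config (N : ℕ) := Torus2 N → Bool

variable {N : ℕ}

@[simp] lemma trC_zero (η : Config N) : trC 0 η = η := by
  funext v; simp [trC]

@[simp] lemma trC_trC (z w : Torus2 N) (η : Config N) : trC z (trC w η) = trC (w + z) η := by
  funext v; simp [trC, sub_sub, add_comm]

def IsTranslationInvariant (φ : Config N → ℝ) : Prop :=
  ∀ (η : Config N) (z : Torus2 N), φ (trC z η) = φ η

lemma isTranslationInvariant_of_generators [NeZero N] {φ : Config N → ℝ}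
    (h₁ : ∀ η, φ (trC (1, 0) η) = φ η) (h₂ : ∀ η, φ (trC (0, 1) η) = φ η) :
    IsTranslationInvariant φ := by
  let stab : AddSubmonoid (Torus2 N) :=
    { carrier := {z | ∀ η, φ (trC z η) = φ η}
      add_mem' := fun {z w} hz hw η => by rw [← trC_trC, hw, hz]
      zero_mem' := fun η => by rw [trC_zero] }
  intro η z
  have hz : z = z.1.val • ((1, 0) : Torus2 N) + z.2.val • ((0, 1) : Torus2 N) := by
    ext <;> simp
  rw [hz]
  exact stab.add_mem (stab.nsmul_mem h₁ _) (stab.nsmul_mem h₂ _) η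

def shift (z : Torus2 N) : (Config N → ℝ) →ₗ[ℝ] Config N → ℝ :=
  LinearMap.funLeft ℝ ℝ (trC z)

@[simp] lemma shift_apply (z : Torus2 N) (φ : Config N → ℝ) (η : Config N) :
    shift z φ η = φ (trC z η) := rfl

def lap : (Config N → ℝ) →ₗ[ℝ] Config N → ℝ :=
  (4 : ℝ) • LinearMap.id - shift (1, 0) - shift (-(1, 0)) - shift (0, 1) - shift (-(0, 1))

lemma lap_apply (φ : Config N → ℝ) (η : Config N) :
    lap φ η = 4 * φ η - φ (trC (1, 0) η) - φ (trC (-(1, 0)) η)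
      - φ (trC (0, 1) η) - φ (trC (-(0, 1)) η) := rfl

-- `∇h + ∇^⊥g` on the edge `(0, e⁽¹⁾)` in the conventions of `hodgeEqs`; `potentialField₂` is
-- the same on `(0, e⁽²⁾)`.
def potentialField₁ (h g : Config N → ℝ) (η : Config N) : ℝ :=
  h (trC (-(1, 0)) η) - h η + (g η - g (trC (0, 1) η))

def potentialField₂ (h g : Config N → ℝ) (η : Config N) : ℝ :=
  h (trC (-(0, 1)) η) - h η + (g (trC (1, 0) η) - g η)

def divergence (u₁ u₂ : Config N → ℝ) (η : Config N) : ℝ :=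
  u₁ (trC (1, 0) η) - u₁ η + (u₂ (trC (0, 1) η) - u₂ η)

def curl (u₁ u₂ : Config N → ℝ) (η : Config N) : ℝ :=
  u₁ η - u₁ (trC (-(0, 1)) η) + (u₂ (trC (-(1, 0)) η) - u₂ η)

lemma divergence_potentialField (h g : Config N → ℝ) :
    divergence (potentialField₁ h g) (potentialField₂ h g) = lap h := by
  ext η
  simp only [divergence, potentialField₁, potentialField₂, lap_apply, trC_trC]
  ring_nf; simp only [trC_zero]; ring

lemma curl_potentialField (h g : Config N → ℝ) :
    curl (potentialField₁ h g) (potentialField₂ h g) = lap g := by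
  ext η
  simp only [curl, potentialField₁, potentialField₂, lap_apply, trC_trC]
  ring_nf; simp only [trC_zero]; ring

lemma potentialField₁_divergence_curl (φ₁ φ₂ : Config N → ℝ) :
    potentialField₁ (divergence φ₁ φ₂) (curl φ₁ φ₂) = lap φ₁ := by
  ext η
  simp only [divergence, curl, potentialField₁, lap_apply, trC_trC]
  ring_nf; simp only [trC_zero]; ring

lemma potentialField₂_divergence_curl (φ₁ φ₂ : Config N → ℝ) :
    potentialField₂ (divergence φ₁ φ₂) (curl φ₁ φ₂) = lap φ₂ := by
  ext η
  simp only [divergence, curl, potentialField₂, lap_apply, trC_trC]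
  ring_nf; simp only [trC_zero]; ring

section Finite

variable [NeZero N]

lemma sum_comp_trC (z : Torus2 N) (F : Config N → ℝ) :
    ∑ η, F (trC z η) = ∑ η, F η :=
  Fintype.sum_equiv ⟨trC z, trC (-z), fun η => by simp, fun η => by simp⟩ _ _ fun _ => rfl

lemma sum_mul_two_sub_shift (φ : Config N → ℝ) (e : Torus2 N) :
    ∑ η, φ η * (2 * φ η - φ (trC e η) - φ (trC (-e) η)) = ∑ η, (φ (trC e η) - φ η) ^ 2 := by
  have hsq : ∑ η, φ (trC e η) ^ 2 = ∑ η, φ η ^ 2 := sum_comp_trC e (φ · ^ 2)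
  have hcross : ∑ η, φ η * φ (trC (-e) η) = ∑ η, φ (trC e η) * φ η := by
    simpa using (sum_comp_trC e fun η => φ η * φ (trC (-e) η)).symm
  calc ∑ η, φ η * (2 * φ η - φ (trC e η) - φ (trC (-e) η))
      = 2 * ∑ η, φ η ^ 2 - ∑ η, φ (trC e η) * φ η - ∑ η, φ η * φ (trC (-e) η) := by
        simp only [Finset.mul_sum, ← Finset.sum_sub_distrib]; congr 1; ext; ring
    _ = ∑ η, (φ (trC e η) - φ η) ^ 2 := by
        rw [hcross]
        simp only [sub_sq, Finset.sum_add_distrib, Finset.sum_sub_distrib, hsq, mul_assoc,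
          ← Finset.mul_sum]
        ring

lemma sum_mul_lap (φ : Config N → ℝ) :
    ∑ η, φ η * lap φ η
      = ∑ η, (φ (trC (1, 0) η) - φ η) ^ 2 + ∑ η, (φ (trC (0, 1) η) - φ η) ^ 2 := by
  rw [← sum_mul_two_sub_shift, ← sum_mul_two_sub_shift, ← Finset.sum_add_distrib]
  congr 1; ext η; rw [lap_apply]; ring

lemma isTranslationInvariant_of_lap_eq_zero {φ : Config N → ℝ} (h : lap φ = 0) :
    IsTranslationInvariant φ := by
  have hsum := sum_mul_lap φ
  simp only [h, Pi.zero_apply, mul_zero, Finset.sum_const_zero] at hsum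
  obtain ⟨h₁, h₂⟩ := (add_eq_zero_iff_of_nonneg (by positivity) (by positivity)).1 hsum.symm
  have fixed {e : Torus2 N} (he : ∑ η, (φ (trC e η) - φ η) ^ 2 = 0) (η : Config N) :
      φ (trC e η) = φ η := by
    rw [Finset.sum_eq_zero_iff_of_nonneg fun _ _ => sq_nonneg _] at he
    simpa [sub_eq_zero] using he η (mem_univ η)
  exact isTranslationInvariant_of_generators (fixed h₁) (fixed h₂)

noncomputable def mean : (Config N → ℝ) →ₗ[ℝ] Config N → ℝ :=
  ((N : ℝ) ^ 2)⁻¹ • ∑ z : Torus2 N, shift z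

lemma mean_apply (φ : Config N → ℝ) (η : Config N) :
    mean φ η = ((N : ℝ) ^ 2)⁻¹ * ∑ z, φ (trC z η) := by
  simp [mean, Finset.sum_apply]

lemma isTranslationInvariant_mean (φ : Config N → ℝ) : IsTranslationInvariant (mean φ) := by
  intro η w
  simp only [mean_apply, trC_trC]
  exact congrArg _ (Equiv.sum_comp (Equiv.addLeft w) fun z => φ (trC z η))

lemma mean_shift (z : Torus2 N) (φ : Config N → ℝ) : mean (shift z φ) = mean φ := by
  ext η
  simp only [mean_apply, shift_apply, trC_trC]
  exact congrArg _ (Equiv.sum_comp (Equiv.addRight z) fun w => φ (trC w η))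

lemma mean_eq_self {φ : Config N → ℝ} (h : IsTranslationInvariant φ) : mean φ = φ := by
  ext η
  have hN : (N : ℝ) ≠ 0 := NeZero.ne _
  rw [mean_apply, Finset.sum_congr rfl fun z _ => h η z, Finset.sum_const, Finset.card_univ,
    Fintype.card_prod, ZMod.card, nsmul_eq_mul]
  push_cast
  field_simp

lemma mean_mean (φ : Config N → ℝ) : mean (mean φ) = mean φ :=
  mean_eq_self (isTranslationInvariant_mean φ)

lemma mean_lap (φ : Config N → ℝ) : mean (lap φ) = 0 := by
  simp only [lap, LinearMap.sub_apply, LinearMap.smul_apply, LinearMap.id_apply, map_sub,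
    map_smul, mean_shift]
  module

lemma lap_add_mean_injective : Function.Injective (lap + mean : (Config N → ℝ) →ₗ[ℝ] _) := by
  rw [← LinearMap.ker_eq_bot, LinearMap.ker_eq_bot']
  intro φ hφ
  have hmean : mean φ = 0 := by simpa [mean_lap, mean_mean] using congrArg mean hφ
  have hlap : lap φ = 0 := by simpa [hmean] using hφ
  rw [← mean_eq_self (isTranslationInvariant_of_lap_eq_zero hlap), hmean]

lemma exists_lap_eq {ψ : Config N → ℝ} (hψ : mean ψ = 0) : ∃ φ, lap φ = ψ := by
  obtain ⟨φ, hφ⟩ := LinearMap.injective_iff_surjective.1 lap_add_mean_injective ψ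
  have hmean : mean φ = 0 := by simpa [mean_lap, mean_mean, hψ] using congrArg mean hφ
  exact ⟨φ, by simpa [hmean] using hφ⟩

lemma exists_potentialField_eq {u₁ u₂ : Config N → ℝ} (hu₁ : mean u₁ = 0) (hu₂ : mean u₂ = 0) :
    ∃ h g, potentialField₁ h g = u₁ ∧ potentialField₂ h g = u₂ := by
  obtain ⟨φ₁, rfl⟩ := exists_lap_eq hu₁
  obtain ⟨φ₂, rfl⟩ := exists_lap_eq hu₂
  exact ⟨_, _, potentialField₁_divergence_curl φ₁ φ₂, potentialField₂_divergence_curl φ₁ φ₂⟩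

lemma isTranslationInvariant_sub_of_potentialField_eq {h g h' g' : Config N → ℝ}
    (e₁ : potentialField₁ h g = potentialField₁ h' g')
    (e₂ : potentialField₂ h g = potentialField₂ h' g') :
    IsTranslationInvariant (h - h') ∧ IsTranslationInvariant (g - g') := by
  constructor <;> apply isTranslationInvariant_of_lap_eq_zero <;> rw [map_sub, sub_eq_zero]
  · rw [← divergence_potentialField h g, ← divergence_potentialField h' g', e₁, e₂]
  · rw [← curl_potentialField h g, ← curl_potentialField h' g', e₁, e₂]

end Finite

section VectorField

variable {j : Config N → Torus2 N → Torus2 N → ℝ}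

lemma apply_eq_apply_zero_of_covariant
    (hcov : ∀ η z x y, j η x y = j (trC z η) (x + z) (y + z)) (η : Config N) (x y : Torus2 N) :
    j η x y = j (trC (-x) η) 0 (y - x) := by
  rw [hcov η (-x), add_neg_cancel, sub_eq_add_neg]

lemma hodgeEqs_of_origin (hanti : ∀ η x y, j η y x = -j η x y)
    (hcov : ∀ η z x y, j η x y = j (trC z η) (x + z) (y + z)) {h g C₁ C₂ : Config N → ℝ}
    (hC₁ : IsTranslationInvariant C₁) (hC₂ : IsTranslationInvariant C₂)
    (h₁ : potentialField₁ h g = (fun η => j η 0 (1, 0)) - C₁)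
    (h₂ : potentialField₂ h g = (fun η => j η 0 (0, 1)) - C₂) :
    hodgeEqs j h g C₁ C₂ := by
  have origin₁ (ζ : Config N) : j ζ 0 (1, 0) = potentialField₁ h g ζ + C₁ ζ := by
    rw [h₁, Pi.sub_apply, sub_add_cancel]
  have origin₂ (ζ : Config N) : j ζ 0 (0, 1) = potentialField₂ h g ζ + C₂ ζ := by
    rw [h₂, Pi.sub_apply, sub_add_cancel]
  have right : ∀ η x, j η x (x + (1, 0))
      = (h (trC (-(x + (1, 0))) η) - h (trC (-x) η))
        + (g (trC (-x) η) - g (trC (-(x - (0, 1))) η)) + C₁ η := by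
    intro η x
    rw [apply_eq_apply_zero_of_covariant hcov, add_sub_cancel_left, origin₁, hC₁, potentialField₁]
    simp only [trC_trC]
    abel_nf
  have up : ∀ η x, j η x (x + (0, 1))
      = (h (trC (-(x + (0, 1))) η) - h (trC (-x) η))
        + (g (trC (-(x - (1, 0))) η) - g (trC (-x) η)) + C₂ η := by
    intro η x
    rw [apply_eq_apply_zero_of_covariant hcov, add_sub_cancel_left, origin₂, hC₂, potentialField₂]
    simp only [trC_trC]
    abel_nf
  intro η x
  refine ⟨right η x, up η x, ?_, ?_⟩
  · have left := right η (x - (1, 0))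
    rw [sub_add_cancel] at left
    rw [hanti, left]
    ring
  · have down := up η (x - (0, 1))
    rw [sub_add_cancel, sub_right_comm _ (0, 1)] at down
    rw [hanti, down]
    ring

lemma potentialField₁_of_hodgeEqs {h g C₁ C₂ : Config N → ℝ} (H : hodgeEqs j h g C₁ C₂) :
    potentialField₁ h g = (fun η => j η 0 (1, 0)) - C₁ := by
  ext η
  have := (H η 0).1
  simp only [zero_add, neg_zero, trC_zero, zero_sub, neg_neg] at this
  rw [Pi.sub_apply, this, potentialField₁]
  ring

lemma potentialField₂_of_hodgeEqs {h g C₁ C₂ : Config N → ℝ} (H : hodgeEqs j h g C₁ C₂) :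
    potentialField₂ h g = (fun η => j η 0 (0, 1)) - C₂ := by
  ext η
  have := (H η 0).2.1
  simp only [zero_add, neg_zero, trC_zero, zero_sub, neg_neg] at this
  rw [Pi.sub_apply, this, potentialField₂]
  ring

section Finite

variable [NeZero N]

lemma mean_edge_eq (hcov : ∀ η z x y, j η x y = j (trC z η) (x + z) (y + z))
    (e : Torus2 N) (η : Config N) :
    mean (fun ζ => j ζ 0 e) η = 1 / (N : ℝ) ^ 2 * ∑ x, j η x (x + e) := by
  rw [mean_apply, one_div, ← Equiv.sum_comp (Equiv.neg _) fun x => j η x (x + e)]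
  congr 1
  refine Finset.sum_congr rfl fun z _ => ?_
  rw [hcov η z]
  simp

lemma const₁_eq_of_hodgeEqs {h g C₁ C₂ : Config N → ℝ} (H : hodgeEqs j h g C₁ C₂)
    (η : Config N) : C₁ η = 1 / (N : ℝ) ^ 2 * ∑ x, j η x (x + (1, 0)) := by
  have shift_h : ∑ x, h (trC (-(x + (1, 0))) η) = ∑ x, h (trC (-x) η) :=
    Equiv.sum_comp (Equiv.addRight (1, 0)) fun x => h (trC (-x) η)
  have shift_g : ∑ x, g (trC (-(x - (0, 1))) η) = ∑ x, g (trC (-x) η) :=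
    Equiv.sum_comp (Equiv.subRight (0, 1)) fun x => g (trC (-x) η)
  have hN : (N : ℝ) ≠ 0 := NeZero.ne _
  rw [Finset.sum_congr rfl fun x _ => (H η x).1]
  simp only [Finset.sum_add_distrib, Finset.sum_sub_distrib, shift_h, shift_g, sub_self,
    zero_add, Finset.sum_const, Finset.card_univ, Fintype.card_prod, ZMod.card, nsmul_eq_mul]
  push_cast
  field_simp

lemma const₂_eq_of_hodgeEqs {h g C₁ C₂ : Config N → ℝ} (H : hodgeEqs j h g C₁ C₂)
    (η : Config N) : C₂ η = 1 / (N : ℝ) ^ 2 * ∑ x, j η x (x + (0, 1)) := by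
  have shift_h : ∑ x, h (trC (-(x + (0, 1))) η) = ∑ x, h (trC (-x) η) :=
    Equiv.sum_comp (Equiv.addRight (0, 1)) fun x => h (trC (-x) η)
  have shift_g : ∑ x, g (trC (-(x - (1, 0))) η) = ∑ x, g (trC (-x) η) :=
    Equiv.sum_comp (Equiv.subRight (1, 0)) fun x => g (trC (-x) η)
  have hN : (N : ℝ) ≠ 0 := NeZero.ne _
  rw [Finset.sum_congr rfl fun x _ => (H η x).2.1]
  simp only [Finset.sum_add_distrib, Finset.sum_sub_distrib, shift_h, shift_g, sub_self,
    zero_add, Finset.sum_const, Finset.card_univ, Fintype.card_prod, ZMod.card, nsmul_eq_mul]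
  push_cast
  field_simp

end Finite

end VectorField

end FunctionalHodge

open FunctionalHodge in
/-- 2d functional Hodge decomposition: every translational
covariant discrete vector field `j` on `ℤ_N²` decomposes as
`j_η(e) = [τ_{e⁺}h − τ_{e⁻}h] + [τ_{𝔣⁺(e)}g − τ_{𝔣⁻(e)}g] ± C⁽ⁱ⁾`, with the
`C⁽ⁱ⁾` translational invariant, uniquely determined and equal to
`(1/N²) Σ_x j_η(x, x+e⁽ⁱ⁾)`, while `h` and `g` are unique up to additive
translational invariant functions. -/
theorem functional_hodge_decomposition_2d
    (N : ℕ) [NeZero N]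
    (j : (Torus2 N → Bool) → Torus2 N → Torus2 N → ℝ)
    (hanti : ∀ η x y, j η y x = -j η x y)
    (hcov : ∀ (η : Torus2 N → Bool) (z x y : Torus2 N),
      j η x y = j (trC z η) (x + z) (y + z)) :
    ∃ h g C₁ C₂ : (Torus2 N → Bool) → ℝ,
      (∀ (η : Torus2 N → Bool) (z : Torus2 N), C₁ (trC z η) = C₁ η)
      ∧ (∀ (η : Torus2 N → Bool) (z : Torus2 N), C₂ (trC z η) = C₂ η)
      ∧ (∀ η, C₁ η = (1 / (N : ℝ) ^ 2) * ∑ x : Torus2 N, j η x (x + (1, 0)))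
      ∧ (∀ η, C₂ η = (1 / (N : ℝ) ^ 2) * ∑ x : Torus2 N, j η x (x + (0, 1)))
      ∧ hodgeEqs j h g C₁ C₂
      ∧ (∀ h' g' C₁' C₂' : (Torus2 N → Bool) → ℝ,
          hodgeEqs j h' g' C₁' C₂' →
            (∀ η, C₁' η = C₁ η ∧ C₂' η = C₂ η)
            ∧ (∀ (η : Torus2 N → Bool) (z : Torus2 N),
                h (trC z η) - h' (trC z η) = h η - h' η)
            ∧ (∀ (η : Torus2 N → Bool) (z : Torus2 N),
                g (trC z η) - g' (trC z η) = g η - g' η)) := by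
  set J₁ : Config N → ℝ := fun η => j η 0 (1, 0)
  set J₂ : Config N → ℝ := fun η => j η 0 (0, 1)
  have mean_fluctuation (J : Config N → ℝ) : mean (J - mean J) = 0 := by
    rw [map_sub, mean_mean, sub_self]
  obtain ⟨h, g, hh, hg⟩ :=
    exists_potentialField_eq (mean_fluctuation J₁) (mean_fluctuation J₂)
  refine ⟨h, g, mean J₁, mean J₂, isTranslationInvariant_mean J₁, isTranslationInvariant_mean J₂,
    mean_edge_eq hcov _, mean_edge_eq hcov _,
    hodgeEqs_of_origin hanti hcov (isTranslationInvariant_mean J₁)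
      (isTranslationInvariant_mean J₂) hh hg, ?_⟩
  intro h' g' C₁' C₂' H
  have hC₁ (η : Config N) : C₁' η = mean J₁ η :=
    (const₁_eq_of_hodgeEqs H η).trans (mean_edge_eq hcov _ η).symm
  have hC₂ (η : Config N) : C₂' η = mean J₂ η :=
    (const₂_eq_of_hodgeEqs H η).trans (mean_edge_eq hcov _ η).symm
  have e₁ : potentialField₁ h g = potentialField₁ h' g' := by
    rw [hh, potentialField₁_of_hodgeEqs H, funext hC₁]
  have e₂ : potentialField₂ h g = potentialField₂ h' g' := by
    rw [hg, potentialField₂_of_hodgeEqs H, funext hC₂]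
  obtain ⟨hinv, ginv⟩ := isTranslationInvariant_sub_of_potentialField_eq e₁ e₂
  exact ⟨fun η => ⟨hC₁ η, hC₂ η⟩, hinv, ginv⟩
end

section
/- (Kawasaki 2d rates are stationary for Gibbs measure) On the torus ℤ_N² with Hamiltonian H(η)=−Σ_{{x,y}∈ℰ}J_{{x,y}}η(x)η(y)−Σ_x λ_x η(x) and Gibbs measure π(η)=e^{−H(η)}/Z, define rates c_{e⁻,e⁺}(η)=η(e⁻)(1−η(e⁺))(w⁺e^{H_{𝔣⁺(e)}(η)}+w⁻e^{H_{𝔣⁻(e)}(η)}) for constants w⁺,w⁻≥0, where H_W(η)=−Σ_{{x,y}∩W≠∅}J_{{x,y}}η(x)η(y)−Σ_{x∈W}λ_xη(x). Then π satisfies the stationary equation Σ_{e∈E}[π(η)c_{e⁻,e⁺}(η)−π(η^{e⁻,e⁺})c_{e⁺,e⁻}(η^{e⁻,e⁺})η(e⁻)(1−η(e⁺))]=0 for every η. -/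
open Finset

attribute [local instance] Classical.propDecidable

/-- Occupation number of a site. -/
def occ (b : Bool) : ℝ := if b then 1 else 0

/-- Hamiltonian with two body nearest neighbour interactions (`J1 x` on the
horizontal edge `{x, x+e¹}` and `J2 x` on the vertical edge `{x, x+e²}`) and
chemical potentials `lam`. -/
noncomputable def ham {N : ℕ} [NeZero N] (J1 J2 lam : Torus2 N → ℝ)
    (η : Torus2 N → Bool) : ℝ :=
  -(∑ x : Torus2 N, (J1 x * occ (η x) * occ (η (x + (1, 0)))
      + J2 x * occ (η x) * occ (η (x + (0, 1)))))
    - ∑ x : Torus2 N, lam x * occ (η x)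

/-- The energy `H_W` restricted to `W`: all interactions of edges meeting `W`
and all chemical potentials of sites in `W`. -/
noncomputable def hamW {N : ℕ} [NeZero N] (J1 J2 lam : Torus2 N → ℝ)
    (W : Finset (Torus2 N)) (η : Torus2 N → Bool) : ℝ :=
  -(∑ x : Torus2 N,
      ((if x ∈ W ∨ x + (1, 0) ∈ W
          then J1 x * occ (η x) * occ (η (x + (1, 0))) else 0)
        + (if x ∈ W ∨ x + (0, 1) ∈ W
          then J2 x * occ (η x) * occ (η (x + (0, 1))) else 0)))
    - ∑ x ∈ W, lam x * occ (η x)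

/-- The set of vertices of the face with lower-left corner `a`. -/
noncomputable def faceSet {N : ℕ} (a : Torus2 N) : Finset (Torus2 N) :=
  {a, a + (1, 0), a + (0, 1), a + (1, 0) + (0, 1)}

/-- The configuration `η^{x,y}` obtained moving one particle from `x` to `y`. -/
def moveC {N : ℕ} (x y : Torus2 N) (η : Torus2 N → Bool) : Torus2 N → Bool :=
  fun z => if z = x then false else if z = y then true else η z

/-- The Gibbs measure `π(η) = e^{−H(η)}/Z`. -/
noncomputable def gibbs {N : ℕ} [NeZero N] (J1 J2 lam : Torus2 N → ℝ)
    (η : Torus2 N → Bool) : ℝ :=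
  Real.exp (-(ham J1 J2 lam η))
    / ∑ ξ : Torus2 N → Bool, Real.exp (-(ham J1 J2 lam ξ))

/-- The Kawasaki rate `c_{u,v}(η) = η(u)(1−η(v))(w⁺ e^{H_{𝔣⁺(e)}(η)}
+ w⁻ e^{H_{𝔣⁻(e)}(η)})`, where `fp`, `fm` are the lower-left corners of the
faces `𝔣⁺(e)` and `𝔣⁻(e)` of the oriented edge `e = (u, v)`. -/
noncomputable def kawRate {N : ℕ} [NeZero N] (J1 J2 lam : Torus2 N → ℝ)
    (wp wm : ℝ) (u v fp fm : Torus2 N) (η : Torus2 N → Bool) : ℝ :=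
  occ (η u) * (1 - occ (η v))
    * (wp * Real.exp (hamW J1 J2 lam (faceSet fp) η)
      + wm * Real.exp (hamW J1 J2 lam (faceSet fm) η))

/-- The summand `π(η)c_{e⁻,e⁺}(η) − π(η^{e⁻,e⁺})c_{e⁺,e⁻}(η^{e⁻,e⁺})
η(e⁻)(1−η(e⁺))` of the stationary equation for the oriented edge `(u,v)`. -/
noncomputable def statTerm {N : ℕ} [NeZero N] (J1 J2 lam : Torus2 N → ℝ)
    (wp wm : ℝ) (u v fp fm : Torus2 N) (η : Torus2 N → Bool) : ℝ :=
  gibbs J1 J2 lam η * kawRate J1 J2 lam wp wm u v fp fm η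
    - occ (η u) * (1 - occ (η v))
      * gibbs J1 J2 lam (moveC u v η)
      * kawRate J1 J2 lam wp wm v u fm fp (moveC u v η)


section KawasakiAux

variable {N : ℕ} [NeZero N]

lemma moveC_out (u v : Torus2 N) (η : Torus2 N → Bool) (z : Torus2 N)
    (hzu : z ≠ u) (hzv : z ≠ v) : moveC u v η z = η z := by
  simp [moveC, hzu, hzv]

/-- The difference `H − H_W` only depends on the configuration outside `W`. -/
lemma ham_sub_hamW_eq (J1 J2 lam : Torus2 N → ℝ) (W : Finset (Torus2 N))
    (η η' : Torus2 N → Bool) (h : ∀ z, z ∉ W → η z = η' z) :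
    ham J1 J2 lam η - hamW J1 J2 lam W η
      = ham J1 J2 lam η' - hamW J1 J2 lam W η' := by
  have hS : ∑ x : Torus2 N,
        ((J1 x * occ (η x) * occ (η (x + (1, 0)))
          + J2 x * occ (η x) * occ (η (x + (0, 1))))
        - ((if x ∈ W ∨ x + (1, 0) ∈ W
              then J1 x * occ (η x) * occ (η (x + (1, 0))) else 0)
          + (if x ∈ W ∨ x + (0, 1) ∈ W
              then J2 x * occ (η x) * occ (η (x + (0, 1))) else 0)))
      = ∑ x : Torus2 N,
        ((J1 x * occ (η' x) * occ (η' (x + (1, 0)))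
          + J2 x * occ (η' x) * occ (η' (x + (0, 1))))
        - ((if x ∈ W ∨ x + (1, 0) ∈ W
              then J1 x * occ (η' x) * occ (η' (x + (1, 0))) else 0)
          + (if x ∈ W ∨ x + (0, 1) ∈ W
              then J2 x * occ (η' x) * occ (η' (x + (0, 1))) else 0))) := by
    refine Finset.sum_congr rfl fun x _ => ?_
    by_cases h1 : x ∈ W ∨ x + (1, 0) ∈ W <;>
      by_cases h2 : x ∈ W ∨ x + (0, 1) ∈ W
    · rw [if_pos h1, if_pos h1, if_pos h2, if_pos h2]; ring
    · have ha : η x = η' x := h x (fun hx => h2 (Or.inl hx))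
      have hb : η (x + (0, 1)) = η' (x + (0, 1)) := h _ (fun hx => h2 (Or.inr hx))
      rw [if_pos h1, if_pos h1, if_neg h2, if_neg h2, ha, hb]; ring
    · have ha : η x = η' x := h x (fun hx => h1 (Or.inl hx))
      have hb : η (x + (1, 0)) = η' (x + (1, 0)) := h _ (fun hx => h1 (Or.inr hx))
      rw [if_neg h1, if_neg h1, if_pos h2, if_pos h2, ha, hb]; ring
    · have ha : η x = η' x := h x (fun hx => h1 (Or.inl hx))
      have hb : η (x + (1, 0)) = η' (x + (1, 0)) := h _ (fun hx => h1 (Or.inr hx))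
      have hc : η (x + (0, 1)) = η' (x + (0, 1)) := h _ (fun hx => h2 (Or.inr hx))
      rw [if_neg h1, if_neg h1, if_neg h2, if_neg h2, ha, hb, hc]
  have hsplit : ∀ X : Torus2 N → Bool,
      ∑ x : Torus2 N, lam x * occ (X x)
        = ∑ x ∈ Wᶜ, lam x * occ (X x) + ∑ x ∈ W, lam x * occ (X x) :=
    fun X => (Finset.sum_compl_add_sum W _).symm
  have hL : (∑ x : Torus2 N, lam x * occ (η x)) - ∑ x ∈ W, lam x * occ (η x)
      = (∑ x : Torus2 N, lam x * occ (η' x)) - ∑ x ∈ W, lam x * occ (η' x) := by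
    rw [hsplit η, hsplit η', add_sub_cancel_right, add_sub_cancel_right]
    exact Finset.sum_congr rfl fun x hx => by
      rw [h x (Finset.mem_compl.mp hx)]
  rw [Finset.sum_sub_distrib, Finset.sum_sub_distrib] at hS
  unfold ham hamW
  linarith [hS, hL]

/-- The key detailed-balance type identity: `π(ξ) e^{H_W(ξ)}` only depends on
`ξ` outside `W`. -/
lemma gibbs_mul_exp_hamW_eq (J1 J2 lam : Torus2 N → ℝ) (W : Finset (Torus2 N))
    (η η' : Torus2 N → Bool) (h : ∀ z, z ∉ W → η z = η' z) :
    gibbs J1 J2 lam η * Real.exp (hamW J1 J2 lam W η)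
      = gibbs J1 J2 lam η' * Real.exp (hamW J1 J2 lam W η') := by
  have key := ham_sub_hamW_eq J1 J2 lam W η η' h
  unfold gibbs
  rw [div_mul_eq_mul_div, div_mul_eq_mul_div, ← Real.exp_add, ← Real.exp_add]
  have : -ham J1 J2 lam η + hamW J1 J2 lam W η
      = -ham J1 J2 lam η' + hamW J1 J2 lam W η' := by linarith
  rw [this]

lemma mem_faceSet_self (a : Torus2 N) : a ∈ faceSet a := by simp [faceSet]

lemma mem_faceSet_r (a : Torus2 N) : a + (1, 0) ∈ faceSet a := by simp [faceSet]

lemma mem_faceSet_u (a : Torus2 N) : a + (0, 1) ∈ faceSet a := by simp [faceSet]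

lemma mem_faceSet_ru (a : Torus2 N) : a + (1, 0) + (0, 1) ∈ faceSet a := by
  simp [faceSet]

/-- Pointwise identity for the stationary summand in terms of the
difference of the two face exponentials. -/
lemma statTerm_eq (J1 J2 lam : Torus2 N → ℝ) (wp wm : ℝ)
    (u v fp fm : Torus2 N)
    (hup : u ∈ faceSet fp) (hvp : v ∈ faceSet fp)
    (hum : u ∈ faceSet fm) (hvm : v ∈ faceSet fm)
    (η : Torus2 N → Bool) :
    statTerm J1 J2 lam wp wm u v fp fm η
      = (wp - wm) * gibbs J1 J2 lam η
        * (occ (η u) * (1 - occ (η v))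
          * (Real.exp (hamW J1 J2 lam (faceSet fp) η)
            - Real.exp (hamW J1 J2 lam (faceSet fm) η))) := by
  by_cases hu : η u
  · by_cases hv : η v
    · simp [statTerm, kawRate, occ, hu, hv]
    · have hne : u ≠ v := fun e => hv (e ▸ hu)
      have hu' : moveC u v η u = false := by simp [moveC]
      have hv' : moveC u v η v = true := by
        simp [moveC, Ne.symm hne]
      have houtp : ∀ z, z ∉ faceSet fp → η z = moveC u v η z := fun z hz =>
        (moveC_out u v η z (fun e => hz (e ▸ hup)) (fun e => hz (e ▸ hvp))).symm
      have houtm : ∀ z, z ∉ faceSet fm → η z = moveC u v η z := fun z hz =>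
        (moveC_out u v η z (fun e => hz (e ▸ hum)) (fun e => hz (e ▸ hvm))).symm
      have k1 := gibbs_mul_exp_hamW_eq J1 J2 lam (faceSet fp) η (moveC u v η) houtp
      have k2 := gibbs_mul_exp_hamW_eq J1 J2 lam (faceSet fm) η (moveC u v η) houtm
      simp only [statTerm, kawRate, hu, hv, hu', hv', occ, if_true, if_false,
        Bool.false_eq_true]
      ring_nf
      ring_nf at k1 k2
      linear_combination wp * k2 + wm * k1
  · simp only [Bool.not_eq_true] at hu
    simp [statTerm, kawRate, occ, hu]

/-- The purely combinatorial cancellation around faces. -/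
lemma sum_faces (o E : Torus2 N → ℝ) :
    ∑ x : Torus2 N,
      (o x * (1 - o (x + (1, 0))) * (E x - E (x - (0, 1)))
        + o x * (1 - o (x + (0, 1))) * (E (x - (1, 0)) - E x)
        + o x * (1 - o (x - (1, 0))) * (E (x - (1, 0) - (0, 1)) - E (x - (1, 0)))
        + o x * (1 - o (x - (0, 1))) * (E (x - (0, 1)) - E (x - (1, 0) - (0, 1)))) = 0 := by
  set A : Torus2 N → ℝ := fun x => o x * o (x + (1, 0)) * (E x - E (x - (0, 1))) with hA
  set B : Torus2 N → ℝ := fun x => o x * o (x + (0, 1)) * (E (x - (1, 0)) - E x) with hB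
  have key : ∀ x : Torus2 N,
      (o x * (1 - o (x + (1, 0))) * (E x - E (x - (0, 1)))
        + o x * (1 - o (x + (0, 1))) * (E (x - (1, 0)) - E x)
        + o x * (1 - o (x - (1, 0))) * (E (x - (1, 0) - (0, 1)) - E (x - (1, 0)))
        + o x * (1 - o (x - (0, 1))) * (E (x - (0, 1)) - E (x - (1, 0) - (0, 1))))
      = (A (x - (1, 0)) - A x) + (B (x - (0, 1)) - B x) := by
    intro x
    simp only [hA, hB, sub_add_cancel]
    rw [show x - (0, 1) - (1, 0) = x - (1, 0) - (0, 1) from sub_right_comm x _ _]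
    ring
  rw [Finset.sum_congr rfl fun x _ => key x, Finset.sum_add_distrib,
    Finset.sum_sub_distrib, Finset.sum_sub_distrib]
  have e1 : ∑ x : Torus2 N, A (x - (1, 0)) = ∑ x : Torus2 N, A x :=
    Equiv.sum_comp (Equiv.subRight ((1, 0) : Torus2 N)) A
  have e2 : ∑ x : Torus2 N, B (x - (0, 1)) = ∑ x : Torus2 N, B x :=
    Equiv.sum_comp (Equiv.subRight ((0, 1) : Torus2 N)) B
  rw [e1, e2]
  ring

end KawasakiAux

/-- the 2d Kawasaki rates are stationary for the Gibbs measure: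
summing the stationary-equation terms over all oriented edges (i.e. over all
`x` and the four directions, with the correct anticlockwise faces `𝔣⁺(e)`,
`𝔣⁻(e)` for each edge) gives zero for every configuration `η`. -/
theorem kawasaki_2d_gibbs_stationary
    (N : ℕ) [NeZero N]
    (J1 J2 lam : Torus2 N → ℝ) (wp wm : ℝ)
    (hwp : 0 ≤ wp) (hwm : 0 ≤ wm) :
    ∀ η : Torus2 N → Bool,
      ∑ x : Torus2 N,
        (statTerm J1 J2 lam wp wm x (x + (1, 0)) x (x - (0, 1)) η
          + statTerm J1 J2 lam wp wm x (x + (0, 1)) (x - (1, 0)) x η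
          + statTerm J1 J2 lam wp wm x (x - (1, 0))
              (x - (1, 0) - (0, 1)) (x - (1, 0)) η
          + statTerm J1 J2 lam wp wm x (x - (0, 1))
              (x - (0, 1)) (x - (1, 0) - (0, 1)) η) = 0 := by
  intro η
  have hterm : ∀ x : Torus2 N,
      (statTerm J1 J2 lam wp wm x (x + (1, 0)) x (x - (0, 1)) η
        + statTerm J1 J2 lam wp wm x (x + (0, 1)) (x - (1, 0)) x η
        + statTerm J1 J2 lam wp wm x (x - (1, 0))
            (x - (1, 0) - (0, 1)) (x - (1, 0)) η
        + statTerm J1 J2 lam wp wm x (x - (0, 1))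
            (x - (0, 1)) (x - (1, 0) - (0, 1)) η)
      = (wp - wm) * gibbs J1 J2 lam η
        * ((fun z => occ (η z)) x * (1 - (fun z => occ (η z)) (x + (1, 0)))
            * ((fun a => Real.exp (hamW J1 J2 lam (faceSet a) η)) x
              - (fun a => Real.exp (hamW J1 J2 lam (faceSet a) η)) (x - (0, 1)))
          + (fun z => occ (η z)) x * (1 - (fun z => occ (η z)) (x + (0, 1)))
            * ((fun a => Real.exp (hamW J1 J2 lam (faceSet a) η)) (x - (1, 0))
              - (fun a => Real.exp (hamW J1 J2 lam (faceSet a) η)) x)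
          + (fun z => occ (η z)) x * (1 - (fun z => occ (η z)) (x - (1, 0)))
            * ((fun a => Real.exp (hamW J1 J2 lam (faceSet a) η)) (x - (1, 0) - (0, 1))
              - (fun a => Real.exp (hamW J1 J2 lam (faceSet a) η)) (x - (1, 0)))
          + (fun z => occ (η z)) x * (1 - (fun z => occ (η z)) (x - (0, 1)))
            * ((fun a => Real.exp (hamW J1 J2 lam (faceSet a) η)) (x - (0, 1))
              - (fun a => Real.exp (hamW J1 J2 lam (faceSet a) η)) (x - (1, 0) - (0, 1)))) := by
    intro x
    have m1 : x ∈ faceSet (x - (0, 1)) := by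
      have := mem_faceSet_u (x - (0, 1)); rwa [sub_add_cancel] at this
    have m2 : x + (1, 0) ∈ faceSet (x - (0, 1)) := by
      have := mem_faceSet_ru (x - (0, 1))
      rwa [show x - (0, 1) + (1, 0) + (0, 1) = x + (1, 0) by abel] at this
    have m3 : x ∈ faceSet (x - (1, 0)) := by
      have := mem_faceSet_r (x - (1, 0)); rwa [sub_add_cancel] at this
    have m4 : x + (0, 1) ∈ faceSet (x - (1, 0)) := by
      have := mem_faceSet_ru (x - (1, 0))
      rwa [show x - (1, 0) + (1, 0) + (0, 1) = x + (0, 1) by abel] at this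
    have m5 : x ∈ faceSet (x - (1, 0) - (0, 1)) := by
      have := mem_faceSet_ru (x - (1, 0) - (0, 1))
      rwa [show x - (1, 0) - (0, 1) + (1, 0) + (0, 1) = x by abel] at this
    have m6 : x - (1, 0) ∈ faceSet (x - (1, 0) - (0, 1)) := by
      have := mem_faceSet_u (x - (1, 0) - (0, 1)); rwa [sub_add_cancel] at this
    have m7 : x - (0, 1) ∈ faceSet (x - (1, 0) - (0, 1)) := by
      have := mem_faceSet_r (x - (1, 0) - (0, 1))
      rwa [show x - (1, 0) - (0, 1) + (1, 0) = x - (0, 1) by abel] at this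
    have m8 : x - (1, 0) ∈ faceSet (x - (1, 0)) := mem_faceSet_self _
    have m9 : x - (0, 1) ∈ faceSet (x - (0, 1)) := mem_faceSet_self _
    rw [statTerm_eq J1 J2 lam wp wm x (x + (1, 0)) x (x - (0, 1))
        (mem_faceSet_self x) (mem_faceSet_r x) m1 m2 η,
      statTerm_eq J1 J2 lam wp wm x (x + (0, 1)) (x - (1, 0)) x
        m3 m4 (mem_faceSet_self x) (mem_faceSet_u x) η,
      statTerm_eq J1 J2 lam wp wm x (x - (1, 0)) (x - (1, 0) - (0, 1)) (x - (1, 0))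
        m5 m6 m3 m8 η,
      statTerm_eq J1 J2 lam wp wm x (x - (0, 1)) (x - (0, 1)) (x - (1, 0) - (0, 1))
        m1 m9 m5 m7 η]
    ring
  rw [Finset.sum_congr rfl fun x _ => hterm x, ← Finset.mul_sum,
    sum_faces (fun z => occ (η z)) (fun a => Real.exp (hamW J1 J2 lam (faceSet a) η)),
    mul_zero]
end

section
/- (Constant harmonic part forces constant C in 1d Kawasaki) Let C be a translational invariant function on configurations {0,1}^{ℤ_N} and suppose there exist functions c̃⁺, c̃⁻ on configurations with domains not containing sites 0 and 1 such that c̃⁻(η)−c̃⁺(η)=C(η) for all η. Then C is constant on each set of configurations agreeing outside {0,1}; combined with translational invariance (N≥5), C must be a constant function. -/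
/-- constant harmonic part forces constant `C`, 1d Kawasaki:
If `C` is a translational invariant function on `{0,1}^{ℤ_N}` and there exist
functions `c̃⁺, c̃⁻` whose domains of dependence avoid the sites `0` and `1`
such that `c̃⁻(η) − c̃⁺(η) = C(η)` for all `η`, then `C` takes the same value
on configurations agreeing outside `{0,1}`; combined with translational
invariance (for `N ≥ 5`), `C` is a constant function. -/
theorem constant_harmonic_part_1d
    (N : ℕ) [NeZero N] (hN : 5 ≤ N)
    (C : (ZMod N → Bool) → ℝ)
    (hCinv : ∀ (η : ZMod N → Bool) (z : ZMod N), C (fun v => η (v - z)) = C η)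
    (ctp ctm : (ZMod N → Bool) → ℝ)
    (hlocp : ∀ η η' : ZMod N → Bool,
      (∀ z, z ≠ 0 → z ≠ 1 → η z = η' z) → ctp η = ctp η')
    (hlocm : ∀ η η' : ZMod N → Bool,
      (∀ z, z ≠ 0 → z ≠ 1 → η z = η' z) → ctm η = ctm η')
    (hdiff : ∀ η, ctm η - ctp η = C η) :
    (∀ η η' : ZMod N → Bool,
        (∀ z, z ≠ 0 → z ≠ 1 → η z = η' z) → C η = C η')
    ∧ (∀ η η' : ZMod N → Bool, C η = C η') := by
  -- C ignores the sites 0 and 1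
  have hdep : ∀ η η' : ZMod N → Bool,
      (∀ z, z ≠ 0 → z ≠ 1 → η z = η' z) → C η = C η' := by
    intro η η' h
    rw [← hdiff, ← hdiff, hlocp η η' h, hlocm η η' h]
  refine ⟨hdep, ?_⟩
  -- C ignores any pair of sites {x, x+1}
  have hpair : ∀ (x : ZMod N) (η η' : ZMod N → Bool),
      (∀ z, z ≠ x → z ≠ x + 1 → η z = η' z) → C η = C η' := by
    intro x η η' h
    have h1 : C (fun v => η (v - (-x))) = C η := hCinv η (-x)
    have h2 : C (fun v => η' (v - (-x))) = C η' := hCinv η' (-x)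
    simp only [sub_neg_eq_add] at h1 h2
    rw [← h1, ← h2]
    apply hdep
    intro z hz0 hz1
    apply h
    · intro hc
      apply hz0
      have : z + x - x = x - x := by rw [hc]
      simpa using this
    · intro hc
      apply hz1
      have : z + x - x = x + 1 - x := by rw [hc]
      simpa [add_sub_cancel_right] using this
  -- C ignores any single site x
  have hsingle : ∀ (x : ZMod N) (η : ZMod N → Bool) (b : Bool),
      C (Function.update η x b) = C η := by
    intro x η b
    apply hpair x
    intro z hz0 _
    simp [Function.update, hz0]
  -- induction over finite sets of sites of disagreement
  have key : ∀ (s : Finset (ZMod N)) (η η' : ZMod N → Bool),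
      (∀ z ∉ s, η z = η' z) → C η = C η' := by
    intro s
    induction s using Finset.induction_on with
    | empty =>
      intro η η' h
      have : η = η' := funext fun z => h z (Finset.notMem_empty z)
      rw [this]
    | @insert x t hx ih =>
      intro η η' h
      have step : C η = C (Function.update η' x (η x)) := by
        apply ih
        intro z hz
        by_cases hzx : z = x
        · subst hzx; simp [Function.update]
        · rw [Function.update_of_ne hzx]
          exact h z (by simp [hzx, hz])
      rw [step, hsingle]
  intro η η'
  exact key Finset.univ η η' (fun z hz => absurd (Finset.mem_univ z) hz)
end
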